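/- Let s be a complex number with Re s ≥ 0 and let v ∈ C³([0,1], ℂ) satisfy s v + v''' = 0 on [0,1] together with the boundary conditions v(0) = 0, v(1) = 0, v'(1) = 0. Then v ≡ 0 on [0,1]. -/

import Mathlib

/-!
Multiplier method. The real function
`g x = 2 x Re (v'' v̄) - 2 Re (v' v̄) - x |v'|²` has derivative `2 x Re (v''' v̄) - 3 |v'|²`,
which by the equation is `-2 x Re s |v|² - 3 |v'|² ≤ 0` on `[0, 1]`. The boundary conditions give
`g 0 = g 1 = 0`, so `g` is constant on `[0, 1]` and its derivative vanishes there; hence `v' = 0`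
and `v = v 0 = 0`.
-/

open Complex Set ComplexConjugate

lemma HasDerivAt.re_mul_conj {f h : ℝ → ℂ} {f' h' : ℂ} {x : ℝ}
    (hf : HasDerivAt f f' x) (hh : HasDerivAt h h' x) :
    HasDerivAt (fun y => (f y * conj (h y)).re) (f' * conj (h x) + f x * conj h').re x :=
  reCLM.hasFDerivAt.comp_hasDerivAt x (hf.mul hh.star)

lemma eq_zero_of_hasDerivAt_nonpos_of_eq_endpoints {g g' : ℝ → ℝ} {a b : ℝ} (hab : a < b)
    (hg : ∀ x ∈ Icc a b, HasDerivAt g (g' x) x) (hg' : ∀ x ∈ Icc a b, g' x ≤ 0)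
    (hgab : g a = g b) : ∀ x ∈ Icc a b, g' x = 0 := by
  have hanti : AntitoneOn g (Icc a b) :=
    antitoneOn_of_hasDerivWithinAt_nonpos (convex_Icc a b)
      (fun x hx => (hg x hx).continuousAt.continuousWithinAt)
      (fun x hx => (hg x (interior_subset hx)).hasDerivWithinAt)
      (fun x hx => hg' x (interior_subset hx))
  have hconst : ∀ x ∈ Icc a b, g x = g a := fun x hx =>
    le_antisymm (hanti (left_mem_Icc.2 hab.le) hx hx.1)
      (hgab ▸ hanti hx (right_mem_Icc.2 hab.le) hx.2)
  intro x hx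
  exact (uniqueDiffOn_Icc hab x hx).eq_deriv _ (hg x hx).hasDerivWithinAt
    ((hasDerivWithinAt_const x _ (g a)).congr hconst (hconst x hx))

noncomputable def kdvMultiplier (v : ℝ → ℂ) (x : ℝ) : ℝ :=
  2 * x * (iteratedDeriv 2 v x * conj (v x)).re - 2 * (deriv v x * conj (v x)).re
    - x * normSq (deriv v x)

lemma hasDerivAt_kdvMultiplier {v : ℝ → ℂ} (hv : ContDiff ℝ 3 v) (x : ℝ) :
    HasDerivAt (kdvMultiplier v)
      (2 * x * (iteratedDeriv 3 v x * conj (v x)).re - 3 * normSq (deriv v x)) x := by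
  have hD : ∀ k < 3, ∀ y, HasDerivAt (iteratedDeriv k v) (iteratedDeriv (k + 1) v y) y :=
    fun k hk y => by
      rw [iteratedDeriv_succ]
      exact (hv.differentiable_iteratedDeriv k (by exact_mod_cast hk) y).hasDerivAt
  have h0 := hD 0 (by norm_num) x
  have h1 := hD 1 (by norm_num) x
  have h2 := hD 2 (by norm_num) x
  simp only [iteratedDeriv_zero, zero_add, iteratedDeriv_one, Nat.reduceAdd] at h0 h1 h2
  have key := ((((hasDerivAt_id x).const_mul 2).mul (h2.re_mul_conj h0)).sub
    ((h1.re_mul_conj h0).const_mul 2)).sub ((hasDerivAt_id x).mul (h1.re_mul_conj h1))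
  refine (key.congr_deriv ?_).congr_of_eventuallyEq (.of_forall fun y => ?_)
  · simp only [id, mul_re, add_re, conj_re, conj_im, normSq_apply]
    ring
  · simp only [kdvMultiplier, Pi.sub_apply, Pi.mul_apply, id, mul_conj, ofReal_re]

lemma hasDerivAt_kdvMultiplier_of_eq {s : ℂ} {v : ℝ → ℂ} (hv : ContDiff ℝ 3 v) {x : ℝ}
    (hx : s * v x + iteratedDeriv 3 v x = 0) :
    HasDerivAt (kdvMultiplier v) (-(2 * x * s.re * normSq (v x)) - 3 * normSq (deriv v x)) x := by
  convert hasDerivAt_kdvMultiplier hv x using 1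
  rw [eq_neg_of_add_eq_zero_right hx]
  simp only [neg_re, neg_im, mul_re, mul_im, conj_re, conj_im, normSq_apply]
  ring

theorem stmt2 (s : ℂ) (hs : 0 ≤ s.re) (v : ℝ → ℂ) (hv : ContDiff ℝ 3 v)
    (hode : ∀ x ∈ Set.Icc (0 : ℝ) 1, s * v x + iteratedDeriv 3 v x = 0)
    (hb0 : v 0 = 0) (hb1 : v 1 = 0) (hb2 : deriv v 1 = 0) :
    ∀ x ∈ Set.Icc (0 : ℝ) 1, v x = 0 := by
  have hterm_nonneg : ∀ x ∈ Icc (0 : ℝ) 1, 0 ≤ 2 * x * s.re * normSq (v x) := fun x hx =>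
    mul_nonneg (mul_nonneg (mul_nonneg zero_le_two hx.1) hs) (normSq_nonneg _)
  have hends : kdvMultiplier v 0 = kdvMultiplier v 1 := by
    simp [kdvMultiplier, hb0, hb1, hb2]
  have hderiv_zero := eq_zero_of_hasDerivAt_nonpos_of_eq_endpoints zero_lt_one
    (fun x hx => hasDerivAt_kdvMultiplier_of_eq hv (hode x hx))
    (fun x hx => by linarith [hterm_nonneg x hx, normSq_nonneg (deriv v x)]) hends
  have hv' : ∀ x ∈ Icc (0 : ℝ) 1, deriv v x = 0 := fun x hx =>
    normSq_eq_zero.1 <| by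
      linarith [hderiv_zero x hx, hterm_nonneg x hx, normSq_nonneg (deriv v x)]
  intro x hx
  rw [← hb0]
  refine constant_of_has_deriv_right_zero hv.continuous.continuousOn (fun y hy => ?_) x hx
  rw [← hv' y (Ico_subset_Icc_self hy)]
  exact (hv.differentiable (by norm_num) y).hasDerivAt.hasDerivWithinAt
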